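/- For every α ∈ k and every integer n ≥ 1, the k[s]/((s−α)^n)-module E' ⊗_{k[s]} k[s]/((s−α)^n) is free of rank 1. -/
import Mathlib


open TensorProduct

/-- The `k[s]`-submodule `E'` of `k(s)` generated by the elements
`g_m = ∏_{j=0}^{m-1} (s-j)⁻¹` for `m ∈ ℕ` (the Mellin transform of the restriction to `G_m`
of the exponential D-module). -/
noncomputable def Eprime (k : Type*) [Field k] : Submodule (Polynomial k) (RatFunc k) :=
  Submodule.span (Polynomial k)
    (Set.range fun m : ℕ =>
      (∏ j ∈ Finset.range m, ((RatFunc.X : RatFunc k) - (j : RatFunc k)))⁻¹)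

open Polynomial

section Aux

variable {k : Type*} [Field k]

/-- The generators of `E'`. -/
noncomputable def gE (k : Type*) [Field k] (m : ℕ) : RatFunc k :=
  (∏ j ∈ Finset.range m, ((RatFunc.X : RatFunc k) - (j : RatFunc k)))⁻¹

lemma gE_mem (m : ℕ) : gE k m ∈ Eprime k := Submodule.subset_span ⟨m, rfl⟩

lemma algebraMap_factor (j : ℕ) :
    algebraMap k[X] (RatFunc k) (X - C (j : k)) = RatFunc.X - (j : RatFunc k) := by
  rw [map_sub, RatFunc.algebraMap_X, C_eq_natCast, map_natCast]

lemma prodF_ne_zero (m : ℕ) :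
    (∏ j ∈ Finset.range m, ((RatFunc.X : RatFunc k) - (j : RatFunc k))) ≠ 0 := by
  rw [Finset.prod_ne_zero_iff]
  intro j _
  rw [← algebraMap_factor]
  exact (map_ne_zero_iff _ (RatFunc.algebraMap_injective k)).mpr (X_sub_C_ne_zero _)

lemma gE_ne_zero (m : ℕ) : gE k m ≠ 0 := inv_ne_zero (prodF_ne_zero m)

lemma gE_telescope {a b : ℕ} (h : a ≤ b) :
    (∏ j ∈ Finset.Ico a b, (X - C (j : k) : k[X])) • gE k b = gE k a := by
  rw [Algebra.smul_def, map_prod]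
  simp only [algebraMap_factor]
  unfold gE
  have hb := prodF_ne_zero (k := k) b
  have ha := prodF_ne_zero (k := k) a
  field_simp
  rw [mul_comm]
  exact Finset.prod_range_mul_prod_Ico _ h

lemma Eprime_repr {x : RatFunc k} (hx : x ∈ Eprime k) (N : ℕ) :
    ∃ m, N ≤ m ∧ ∃ q : k[X], x = q • gE k m := by
  induction hx using Submodule.span_induction with
  | mem x h =>
      obtain ⟨m0, rfl⟩ := h
      refine ⟨max m0 N, le_max_right _ _,
        ∏ j ∈ Finset.Ico m0 (max m0 N), (X - C (j : k)), ?_⟩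
      exact (gE_telescope (le_max_left _ _)).symm
  | zero => exact ⟨N, le_refl N, 0, by simp⟩
  | add x y hx hy ihx ihy =>
      obtain ⟨m1, hm1, q1, rfl⟩ := ihx
      obtain ⟨m2, hm2, q2, rfl⟩ := ihy
      refine ⟨max m1 m2, le_trans hm1 (le_max_left _ _),
        q1 * ∏ j ∈ Finset.Ico m1 (max m1 m2), (X - C (j : k)) +
        q2 * ∏ j ∈ Finset.Ico m2 (max m1 m2), (X - C (j : k)), ?_⟩
      rw [add_smul, mul_smul, mul_smul, gE_telescope (le_max_left _ _),
        gE_telescope (le_max_right _ _)]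
  | smul a x hx ih =>
      obtain ⟨m, hm, q, rfl⟩ := ih
      exact ⟨m, hm, a * q, (mul_smul a q _).symm⟩

lemma coprime_pow_prod {α : k} (n : ℕ) {a : ℕ} (b : ℕ) (h : ∀ j : ℕ, a ≤ j → (j : k) ≠ α) :
    IsCoprime ((X - C α) ^ n : k[X]) (∏ j ∈ Finset.Ico a b, (X - C (j : k))) := by
  apply IsCoprime.pow_left
  apply IsCoprime.prod_right
  intro j hj
  apply isCoprime_X_sub_C_of_isUnit_sub
  exact (sub_ne_zero.mpr (Ne.symm (h j (Finset.mem_Ico.mp hj).1))).isUnit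

lemma smul_gE_cancel {p q : k[X]} {m : ℕ} (h : p • gE k m = q • gE k m) : p = q := by
  rw [Algebra.smul_def, Algebra.smul_def] at h
  exact RatFunc.algebraMap_injective k (mul_right_cancel₀ (gE_ne_zero m) h)

end Aux

/-- For every `α ∈ k` and `n ≥ 1`, the module `E' ⊗_{k[s]} k[s]/((s-α)^n)` is free of rank 1
over `k[s]/((s-α)^n)`, i.e., it is isomorphic to `k[s]/((s-α)^n)`. -/
theorem stmt8 (k : Type*) [Field k] [CharZero k] (α : k) (n : ℕ) (hn : 1 ≤ n) :
    Nonempty ((↥(Eprime k) ⊗[Polynomial k]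
        (Polynomial k ⧸ Ideal.span {(Polynomial.X - Polynomial.C α) ^ n}))
      ≃ₗ[Polynomial k] Polynomial k ⧸ Ideal.span {(Polynomial.X - Polynomial.C α) ^ n}) := by
  classical
  obtain ⟨M, hM⟩ : ∃ M : ℕ, ∀ j : ℕ, M ≤ j → (j : k) ≠ α := by
    by_cases h : ∃ m : ℕ, (m : k) = α
    · obtain ⟨m, hm⟩ := h
      refine ⟨m + 1, fun j hj hj' => ?_⟩
      have : (j : k) = (m : k) := hj'.trans hm.symm
      have : j = m := Nat.cast_injective this
      omega
    · exact ⟨0, fun j _ hj' => h ⟨j, hj'⟩⟩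
  set t : k[X] := (X - C α) ^ n with ht
  set I : Ideal k[X] := Ideal.span {t} with hI
  set gM : ↥(Eprime k) := ⟨gE k M, gE_mem M⟩ with hgM
  set θ : k[X] →ₗ[k[X]] ↥(Eprime k) ⧸ (I • ⊤ : Submodule k[X] ↥(Eprime k)) :=
    (Submodule.mkQ _) ∘ₗ (LinearMap.toSpanSingleton k[X] _ gM) with hθ
  have θ_apply : ∀ p : k[X], θ p = Submodule.Quotient.mk (p • gM) := fun p => rfl
  have hIker : I ≤ LinearMap.ker θ := by
    intro p hp
    obtain ⟨c, rfl⟩ := Ideal.mem_span_singleton.mp hp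
    rw [LinearMap.mem_ker, θ_apply, Submodule.Quotient.mk_eq_zero, mul_smul]
    exact Submodule.smul_mem_smul (Ideal.subset_span rfl) trivial
  set θbar := Submodule.liftQ I θ hIker with hθbar
  have hrange : (I • ⊤ : Submodule k[X] ↥(Eprime k)) ≤
      LinearMap.range (LinearMap.lsmul k[X] ↥(Eprime k) t) := by
    rw [Submodule.smul_le]
    intro r hr e _
    obtain ⟨c, rfl⟩ := Ideal.mem_span_singleton.mp hr
    exact ⟨c • e, (mul_smul t c e).symm⟩
  have hinj : Function.Injective θbar := by
    rw [← LinearMap.ker_eq_bot]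
    apply Submodule.ker_liftQ_eq_bot
    intro p hp
    rw [LinearMap.mem_ker, θ_apply, Submodule.Quotient.mk_eq_zero] at hp
    obtain ⟨e, he⟩ := hrange hp
    obtain ⟨m, hm, q, hq⟩ := Eprime_repr e.2 M
    have hcoe : (t • (e : RatFunc k)) = p • gE k M := congrArg Subtype.val he
    have heq : (t * q) • gE k m =
        (p * ∏ j ∈ Finset.Ico M m, (X - C (j : k))) • gE k m := by
      rw [mul_smul, mul_smul, gE_telescope hm, ← hq, ← hcoe]
    have hd : t * q = p * ∏ j ∈ Finset.Ico M m, (X - C (j : k)) := smul_gE_cancel heq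
    have hdvd : t ∣ p * ∏ j ∈ Finset.Ico M m, (X - C (j : k)) := ⟨q, hd.symm⟩
    exact Ideal.mem_span_singleton.mpr ((coprime_pow_prod n m hM).dvd_of_dvd_mul_right hdvd)
  have hsurj : Function.Surjective θbar := by
    intro y
    obtain ⟨e, rfl⟩ := Submodule.mkQ_surjective _ y
    obtain ⟨m, hm, q, hq⟩ := Eprime_repr e.2 M
    obtain ⟨a, b, hab⟩ := coprime_pow_prod (α := α) n m hM
    set d : k[X] := ∏ j ∈ Finset.Ico M m, (X - C (j : k)) with hd
    refine ⟨Submodule.Quotient.mk (q * b), ?_⟩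
    rw [hθbar, Submodule.liftQ_apply, θ_apply, Submodule.mkQ_apply, Submodule.Quotient.eq]
    have key : (q * b) • gM - e = t • ((-(q * a)) • (⟨gE k m, gE_mem m⟩ : ↥(Eprime k))) := by
      apply Subtype.ext
      have : ((q * b) • gM - e : ↥(Eprime k)).val = (q * b) • gE k M - (e : RatFunc k) := rfl
      rw [this, hq, ← gE_telescope (k := k) hm, ← hd, smul_smul]
      have h2 : (t • ((-(q * a)) • (⟨gE k m, gE_mem m⟩ : ↥(Eprime k)))).val
          = (t * (-(q * a))) • gE k m := by
        rw [← mul_smul]; rfl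
      rw [h2, ← sub_smul]
      congr 1
      linear_combination q * hab
    rw [key]
    exact Submodule.smul_mem_smul (Ideal.subset_span rfl) trivial
  exact ⟨(TensorProduct.tensorQuotEquivQuotSMul ↥(Eprime k) I) ≪≫ₗ
    (LinearEquiv.ofBijective θbar ⟨hinj, hsurj⟩).symm⟩
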